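/- arXiv:1807.10799 — 2 statements merged into one kernel-verified Lean document; each statement's English description precedes it below -/
import Mathlib

section
/- Let 𝐚 = [a_{kj}]_{k,j=1}^3 be a real symmetric positive definite 3×3 matrix, κ₁ > 0 and ω > 0. Then Γ(·,ω) satisfies the Sommerfeld-type radiation conditions associated with the operator A₁ = Σ a_{kj}∂_k∂_j + ω²κ₁: there exist constants C > 0 and R > 0 such that for all x with |x| ≥ R and all k ∈ {1,2,3}, |Γ(x,ω)| ≤ C/|x| and |∂Γ(x,ω)/∂x_k − i ξ_k(x/|x|) Γ(x,ω)| ≤ C/|x|². -/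
/-!
Write `ρ(x) = (𝐚⁻¹x·x)^{1/2}` and `K = 4π (det 𝐚)^{1/2}`. Then `Γ = h ∘ ρ` with the radial profile
`h(t) = -exp(i ω κ₁^{1/2} t) / (K t)`, which satisfies `h' = (i ω κ₁^{1/2} - 1/t) h`, while
`∂ₖρ = (𝐚⁻¹x)ₖ / ρ` and `ξₖ(x/|x|) = ω κ₁^{1/2} (𝐚⁻¹x)ₖ / ρ`. The oscillating terms cancel:
`∂ₖΓ - i ξₖ Γ = -((𝐚⁻¹x)ₖ / ρ²) Γ`, and `|Γ| = 1/(K ρ)`. Both bounds then follow, for every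
`x ≠ 0`, from `ρ(x) ≥ c|x|` (the positive definite form attains a positive minimum on the unit
sphere) and `|(𝐚⁻¹x)ₖ| ≤ ‖𝐚⁻¹‖ |x|`.
-/

open MeasureTheory Filter
open scoped Topology BigOperators

noncomputable section

/-- Three-dimensional Euclidean space. -/
abbrev E3 := EuclideanSpace ℝ (Fin 3)

/-- The inner product `𝐚⁻¹ x · x`. -/
def qf (a : Matrix (Fin 3) (Fin 3) ℝ) (x : E3) : ℝ :=
  ∑ i, a⁻¹.mulVec (fun j => x j) i * x i

/-- The radiating fundamental solution
`Γ(x,ω) = −exp(i ω κ₁^{1/2} (𝐚⁻¹x·x)^{1/2}) / (4π (det 𝐚)^{1/2} (𝐚⁻¹x·x)^{1/2})`. -/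
def Gamma (a : Matrix (Fin 3) (Fin 3) ℝ) (κ₁ ω : ℝ) (x : E3) : ℂ :=
  -Complex.exp (Complex.I * (ω : ℂ) * (Real.sqrt κ₁ : ℂ) * (Real.sqrt (qf a x) : ℂ)) /
    ((4 * Real.pi * Real.sqrt a.det * Real.sqrt (qf a x) : ℝ) : ℂ)

/-- Directional (partial) derivative `∂f/∂x_k`. -/
def pd (f : E3 → ℂ) (k : Fin 3) (x : E3) : ℂ :=
  fderiv ℝ f x (EuclideanSpace.single k 1)

/-- `ξ(η) = ω κ₁^{1/2} (𝐚⁻¹η·η)^{−1/2} 𝐚⁻¹η` for a (unit) vector `η`. -/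
def xiVec (a : Matrix (Fin 3) (Fin 3) ℝ) (κ₁ ω : ℝ) (η : Fin 3 → ℝ) : Fin 3 → ℝ :=
  (ω * Real.sqrt κ₁ * (Real.sqrt (∑ i, a⁻¹.mulVec η i * η i))⁻¹) • a⁻¹.mulVec η

open Matrix WithLp

namespace ContinuousLinearMap

variable {𝕜 E : Type*} [RCLike 𝕜] [NormedAddCommGroup E] [InnerProductSpace 𝕜 E]
  [FiniteDimensional 𝕜 E]

theorem exists_pos_mul_sq_norm_le_reApplyInnerSelf (T : E →L[𝕜] E)
    (hT : ∀ x ≠ 0, 0 < T.reApplyInnerSelf x) :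
    ∃ c > 0, ∀ x, c * ‖x‖ ^ 2 ≤ T.reApplyInnerSelf x := by
  have := FiniteDimensional.proper_rclike 𝕜 E
  rcases subsingleton_or_nontrivial E with hE | hE
  · exact ⟨1, one_pos, fun x => by simp [Subsingleton.elim x 0, reApplyInnerSelf_apply]⟩
  obtain ⟨u, hu, hmin⟩ := (isCompact_sphere (0 : E) 1).exists_isMinOn
    (Set.nonempty_coe_sort.1 (NormedSpace.sphere_nonempty_rclike 𝕜 zero_le_one))
    T.reApplyInnerSelf_continuous.continuousOn
  refine ⟨T.reApplyInnerSelf u, hT u (ne_zero_of_mem_unit_sphere ⟨u, hu⟩), fun x => ?_⟩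
  rcases eq_or_ne x 0 with rfl | hx
  · simp [reApplyInnerSelf_apply]
  obtain ⟨y, hy, hxy⟩ : T.rayleighQuotient x ∈ T.rayleighQuotient '' Metric.sphere 0 1 :=
    T.image_rayleigh_eq_image_rayleigh_sphere one_pos ▸ ⟨x, hx, rfl⟩
  have hmin' : T.reApplyInnerSelf u ≤ T.rayleighQuotient x := by
    rw [← hxy, rayleighQuotient, mem_sphere_zero_iff_norm.1 hy, one_pow, div_one]
    exact hmin hy
  rwa [rayleighQuotient, le_div_iff₀ (by positivity)] at hmin'

end ContinuousLinearMap

theorem Matrix.abs_mulVec_apply_le {ι : Type*} [Fintype ι] [DecidableEq ι] (b : Matrix ι ι ℝ)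
    (x : EuclideanSpace ℝ ι) (k : ι) :
    |(b *ᵥ ofLp x) k| ≤ ‖toEuclideanCLM (𝕜 := ℝ) b‖ * ‖x‖ :=
  (PiLp.norm_apply_le (toEuclideanCLM (𝕜 := ℝ) b x) k).trans
    ((toEuclideanCLM (𝕜 := ℝ) b).le_opNorm x)

theorem hasDerivAt_neg_cexp_mul_div (c : ℂ) {K t : ℝ} (hK : K ≠ 0) (ht : t ≠ 0) :
    HasDerivAt (fun s : ℝ => -Complex.exp (c * s) / ((K * s : ℝ) : ℂ))
      ((c - (t : ℂ)⁻¹) * (-Complex.exp (c * t) / ((K * t : ℝ) : ℂ))) t := by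
  have hs : HasDerivAt (fun s : ℝ => (s : ℂ)) 1 t := (hasDerivAt_id t).ofReal_comp
  have hnum := ((hs.const_mul c).cexp).fun_neg
  have hden : HasDerivAt (fun s : ℝ => ((K * s : ℝ) : ℂ)) K t := by
    simpa using (hs.const_mul (K : ℂ))
  refine (hnum.div hden (by exact_mod_cast mul_ne_zero hK ht)).congr_deriv ?_
  have hK' : (K : ℂ) ≠ 0 := by exact_mod_cast hK
  have ht' : (t : ℂ) ≠ 0 := by exact_mod_cast ht
  push_cast
  field_simp
  ring

theorem qf_eq_reApplyInnerSelf (a : Matrix (Fin 3) (Fin 3) ℝ) :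
    qf a = (toEuclideanCLM (𝕜 := ℝ) a⁻¹).reApplyInnerSelf := by
  ext x
  rw [ContinuousLinearMap.reApplyInnerSelf_apply, RCLike.re_to_real, real_inner_comm,
    inner_toEuclideanCLM, qf, dotProduct_comm]
  rfl

theorem xiVec_smul (a : Matrix (Fin 3) (Fin 3) ℝ) (κ₁ ω : ℝ) {t : ℝ} (ht : 0 < t)
    (η : Fin 3 → ℝ) : xiVec a κ₁ ω (t • η) = xiVec a κ₁ ω η := by
  have hsum : ∑ i, (a⁻¹ *ᵥ (t • η)) i * (t • η) i = t ^ 2 * ∑ i, (a⁻¹ *ᵥ η) i * η i := by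
    simp only [mulVec_smul, Pi.smul_apply, smul_eq_mul, Finset.mul_sum]
    exact Finset.sum_congr rfl fun i _ => by ring
  rw [xiVec, xiVec, hsum, Real.sqrt_mul (sq_nonneg t), Real.sqrt_sq ht.le, mulVec_smul,
    smul_smul]
  congr 1
  field_simp

section

variable {a : Matrix (Fin 3) (Fin 3) ℝ} {x : E3}

theorem qf_pos (ha : a.PosDef) (hx : x ≠ 0) : 0 < qf a x := by
  have := (posDef_iff_dotProduct_mulVec.1 ha.inv).2 (x := ofLp x) (by simpa using hx)
  simpa [qf, dotProduct, mul_comm] using this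

theorem exists_pos_mul_norm_le_sqrt_qf (ha : a.PosDef) :
    ∃ c > 0, ∀ x : E3, c * ‖x‖ ≤ √(qf a x) := by
  obtain ⟨c, hc, hcx⟩ := (toEuclideanCLM (𝕜 := ℝ) a⁻¹).exists_pos_mul_sq_norm_le_reApplyInnerSelf
    fun x hx => qf_eq_reApplyInnerSelf a ▸ qf_pos ha hx
  refine ⟨√c, Real.sqrt_pos.2 hc, fun x => ?_⟩
  rw [← Real.sqrt_sq (norm_nonneg x), ← Real.sqrt_mul hc.le, qf_eq_reApplyInnerSelf]
  exact Real.sqrt_le_sqrt (hcx x)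

theorem hasFDerivAt_sqrt_qf (ha : a.PosDef) (hx : x ≠ 0) :
    HasFDerivAt (fun y => √(qf a y))
      ((√(qf a x))⁻¹ • innerSL ℝ (toEuclideanCLM (𝕜 := ℝ) a⁻¹ x)) x := by
  have hsymm : (toEuclideanLin a⁻¹).IsSymmetric :=
    isSymmetric_toEuclideanLin_iff.2 ha.inv.isHermitian
  have hq :=
    (hsymm.hasStrictFDerivAt_reApplyInnerSelf (T := toEuclideanCLM (𝕜 := ℝ) a⁻¹) x).hasFDerivAt
  rw [← qf_eq_reApplyInnerSelf] at hq
  refine ((Real.hasDerivAt_sqrt (qf_pos ha hx).ne').comp_hasFDerivAt x hq).congr_fderiv ?_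
  rw [two_smul, ← two_smul ℝ, smul_smul]
  congr 1
  field_simp


variable (κ₁ ω : ℝ)

theorem norm_Gamma (x : E3) :
    ‖Gamma a κ₁ ω x‖ = (4 * Real.pi * √a.det * √(qf a x))⁻¹ := by
  have hre : (Complex.I * ω * (√κ₁ : ℂ) * (√(qf a x) : ℂ)).re = 0 := by
    simp [Complex.mul_re, Complex.mul_im]
  rw [Gamma, norm_div, norm_neg, Complex.norm_exp, hre, Real.exp_zero, Complex.norm_real,
    Real.norm_eq_abs, abs_of_nonneg (by positivity), one_div]

theorem pd_Gamma (ha : a.PosDef) (hx : x ≠ 0) (k : Fin 3) :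
    pd (Gamma a κ₁ ω) k x = (((a⁻¹ *ᵥ ofLp x) k / √(qf a x) : ℝ) : ℂ) *
      ((Complex.I * ω * √κ₁ - ((√(qf a x) : ℝ) : ℂ)⁻¹) * Gamma a κ₁ ω x) := by
  have hK : 4 * Real.pi * √a.det ≠ 0 := by have := ha.det_pos; positivity
  have hΓ := (hasDerivAt_iff_hasFDerivAt.1 (hasDerivAt_neg_cexp_mul_div (Complex.I * ω * √κ₁) hK
    (Real.sqrt_pos.2 (qf_pos ha hx)).ne')).comp x (hasFDerivAt_sqrt_qf ha hx)
  rw [pd, show Gamma a κ₁ ω = (fun t : ℝ => -Complex.exp (Complex.I * ω * √κ₁ * t) /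
    ((4 * Real.pi * √a.det * t : ℝ) : ℂ)) ∘ fun y => √(qf a y) from rfl, hΓ.fderiv]
  rw [ContinuousLinearMap.comp_apply, _root_.smul_apply, innerSL_apply_apply,
    EuclideanSpace.inner_single_right, ContinuousLinearMap.toSpanSingleton_apply,
    ofLp_toEuclideanCLM, Complex.real_smul]
  simp only [one_mul, conj_trivial, smul_eq_mul, Function.comp_apply]
  push_cast
  ring

theorem pd_Gamma_sub_xiVec_mul_Gamma (ha : a.PosDef) (hx : x ≠ 0) (k : Fin 3) :
    pd (Gamma a κ₁ ω) k x
        - Complex.I * ((xiVec a κ₁ ω (fun i => ‖x‖⁻¹ * x i) k : ℝ) : ℂ) * Gamma a κ₁ ω x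
      = -(((a⁻¹ *ᵥ ofLp x) k / qf a x : ℝ) : ℂ) * Gamma a κ₁ ω x := by
  have hq := qf_pos ha hx
  have hr : ((√(qf a x) : ℝ) : ℂ) ≠ 0 := by exact_mod_cast (Real.sqrt_pos.2 hq).ne'
  have hqr : ((qf a x : ℝ) : ℂ) = ((√(qf a x) : ℝ) : ℂ) ^ 2 := by
    exact_mod_cast (Real.sq_sqrt hq.le).symm
  rw [pd_Gamma κ₁ ω ha hx, show (fun i => ‖x‖⁻¹ * x i) = ‖x‖⁻¹ • ofLp x from rfl,
    xiVec_smul a κ₁ ω (inv_pos.2 (norm_pos_iff.2 hx))]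
  change _ - _ * (((ω * √κ₁ * (√(qf a x))⁻¹) * (a⁻¹ *ᵥ ofLp x) k : ℝ) : ℂ) * _ = _
  push_cast
  rw [hqr]
  field_simp
  ring

theorem norm_Gamma_le (ha : a.PosDef) (hx : x ≠ 0) {c : ℝ} (hc : 0 < c)
    (hcx : c * ‖x‖ ≤ √(qf a x)) :
    ‖Gamma a κ₁ ω x‖ ≤ (4 * Real.pi * √a.det * c)⁻¹ / ‖x‖ := by
  have hdet := ha.det_pos
  have hnx := norm_pos_iff.2 hx
  rw [norm_Gamma, div_eq_mul_inv, ← mul_inv]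
  refine inv_anti₀ (by positivity) ?_
  rw [mul_assoc _ c]
  exact mul_le_mul_of_nonneg_left hcx (by positivity)

theorem norm_pd_Gamma_sub_xiVec_mul_Gamma_le (ha : a.PosDef) (hx : x ≠ 0) (k : Fin 3)
    {c M : ℝ} (hc : 0 < c) (hcx : c * ‖x‖ ≤ √(qf a x))
    (hM : |(a⁻¹ *ᵥ ofLp x) k| ≤ M * ‖x‖) :
    ‖pd (Gamma a κ₁ ω) k x
        - Complex.I * ((xiVec a κ₁ ω (fun i => ‖x‖⁻¹ * x i) k : ℝ) : ℂ) * Gamma a κ₁ ω x‖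
      ≤ M / (4 * Real.pi * √a.det * c ^ 3) / ‖x‖ ^ 2 := by
  have hdet := ha.det_pos
  have hnx := norm_pos_iff.2 hx
  have hq := qf_pos ha hx
  rw [pd_Gamma_sub_xiVec_mul_Gamma κ₁ ω ha hx, norm_mul, norm_neg, Complex.norm_real, norm_Gamma,
    Real.norm_eq_abs, abs_div, abs_of_pos hq]
  calc |(a⁻¹ *ᵥ ofLp x) k| / qf a x * (4 * Real.pi * √a.det * √(qf a x))⁻¹
      = |(a⁻¹ *ᵥ ofLp x) k| / (4 * Real.pi * √a.det * √(qf a x) ^ 3) := by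
        nth_rw 1 [← Real.sq_sqrt hq.le]
        field_simp
    _ ≤ M * ‖x‖ / (4 * Real.pi * √a.det * (c * ‖x‖) ^ 3) := by
        gcongr
        exact (abs_nonneg _).trans hM
    _ = M / (4 * Real.pi * √a.det * c ^ 3) / ‖x‖ ^ 2 := by
        field_simp

end

theorem stmt3_general (a : Matrix (Fin 3) (Fin 3) ℝ) (ha : a.PosDef)
    (κ₁ ω : ℝ) :
    ∃ C > (0 : ℝ), ∃ R > (0 : ℝ), ∀ x : E3, R ≤ ‖x‖ → ∀ k : Fin 3,
      ‖Gamma a κ₁ ω x‖ ≤ C / ‖x‖ ∧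
      ‖pd (Gamma a κ₁ ω) k x
          - Complex.I * ((xiVec a κ₁ ω (fun i => ‖x‖⁻¹ * x i) k : ℝ) : ℂ)
            * Gamma a κ₁ ω x‖ ≤ C / ‖x‖ ^ 2 := by
  obtain ⟨c, hc, hcx⟩ := exists_pos_mul_norm_le_sqrt_qf ha
  set M := ‖toEuclideanCLM (𝕜 := ℝ) a⁻¹‖
  have hdet := ha.det_pos
  refine ⟨(4 * Real.pi * √a.det * c)⁻¹ + M / (4 * Real.pi * √a.det * c ^ 3), by positivity,
    1, one_pos, fun x hx k => ?_⟩
  have hx0 : x ≠ 0 := norm_pos_iff.1 (one_pos.trans_le hx)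
  constructor
  · refine (norm_Gamma_le κ₁ ω ha hx0 hc (hcx x)).trans ?_
    gcongr
    exact le_add_of_nonneg_right (by positivity)
  · refine (norm_pd_Gamma_sub_xiVec_mul_Gamma_le κ₁ ω ha hx0 k hc (hcx x)
      (abs_mulVec_apply_le a⁻¹ x k)).trans ?_
    gcongr
    exact le_add_of_nonneg_left (by positivity)

/-- `Γ(·,ω)` satisfies the Sommerfeld-type radiation conditions
associated with `A₁`: there are `C > 0`, `R > 0` such that for `|x| ≥ R` and
`k = 1,2,3`, `|Γ(x,ω)| ≤ C/|x|` and `|∂_kΓ(x,ω) − i ξ_k(x/|x|) Γ(x,ω)| ≤ C/|x|²`. -/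
theorem stmt3 (a : Matrix (Fin 3) (Fin 3) ℝ) (ha : a.PosDef) (hsym : a.IsSymm)
    (κ₁ ω : ℝ) (hκ : 0 < κ₁) (hω : 0 < ω) :
    ∃ C > (0 : ℝ), ∃ R > (0 : ℝ), ∀ x : E3, R ≤ ‖x‖ → ∀ k : Fin 3,
      ‖Gamma a κ₁ ω x‖ ≤ C / ‖x‖ ∧
      ‖pd (Gamma a κ₁ ω) k x
          - Complex.I * ((xiVec a κ₁ ω (fun i => ‖x‖⁻¹ * x i) k : ℝ) : ℂ)
            * Gamma a κ₁ ω x‖ ≤ C / ‖x‖ ^ 2 :=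
  stmt3_general a ha κ₁ ω
end
end

section
/- Let 𝐚 = [a_{kj}]_{k,j=1}^3 be a real symmetric positive definite 3×3 matrix, κ₁ > 0 and ω ∈ ℝ with ω ≠ 0. Suppose R₀ > 0, C₀ > 0, and v : {x ∈ ℝ³ : |x| ≥ R₀} → ℂ is continuously differentiable and satisfies |v(x)| ≤ C₀/|x| and |∂v(x)/∂x_k − i ξ_k(x/|x|) v(x)| ≤ C₀/|x|² for all |x| ≥ R₀ and k = 1,2,3. For R ≥ R₀ let Σ_R denote the sphere of radius R centered at the origin with its surface measure dσ, and set T₁v(x) := Σ_{k,j=1}^3 a_{kj} (x_k/|x|) ∂v(x)/∂x_j. Then lim_{R→∞} Im ∫_{Σ_R} conj(v(x)) T₁v(x) dσ(x) = 0 if and only if lim_{R→∞} ∫_{Σ_R} |v(x)|² dσ(x) = 0. -/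
/-!
On the sphere `Σ_R` the radiation condition says `∂_j v ≈ i ξ_j v` up to `O(R⁻²)`, and since
`𝐚 ξ(η)` is a multiple of `η`, this gives
`conj(v) T₁v = i ω κ₁^{1/2} (𝐚⁻¹η·η)^{-1/2} |v|² + O(R⁻³)`.
The sphere has area `O(R²)`, so `Im ∫_{Σ_R} conj(v) T₁v` differs from `ω κ₁^{1/2}` times the
weighted integral `∫_{Σ_R} (𝐚⁻¹η·η)^{-1/2} |v|²` by `O(1/R)`. By positive definiteness and
compactness the weight lies between two positive constants on the unit sphere, so the weighted
integral and `∫_{Σ_R} |v|²` tend to zero together.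
-/

open MeasureTheory Filter
open scoped Topology BigOperators

noncomputable section

/-- The anisotropic co-normal derivative `T₁v(x) = Σ a_{kj} (x_k/|x|) ∂_j v(x)`. -/
def T1 (a : Matrix (Fin 3) (Fin 3) ℝ) (v : E3 → ℂ) (x : E3) : ℂ :=
  ∑ k : Fin 3, ∑ j : Fin 3,
    (a k j : ℂ) * ((x k / ‖x‖ : ℝ) : ℂ) * fderiv ℝ v x (EuclideanSpace.single j 1)

/-- The canonical surface measure on the unit sphere of `ℝ³`
(`volume.toSphere` has total mass `4π`). -/
def sphMeasure : Measure (Metric.sphere (0 : E3) 1) :=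
  (volume : Measure E3).toSphere

open Matrix Complex ComplexConjugate

instance : IsFiniteMeasure sphMeasure :=
  inferInstanceAs (IsFiniteMeasure (volume : Measure E3).toSphere)

section Limits

variable {α : Type*} {l : Filter α} {F G H : α → ℝ}

theorem tendsto_zero_iff_of_tendsto_sub_const_mul {c : ℝ} (hc : c ≠ 0)
    (h : Tendsto (fun x => G x - c * H x) l (𝓝 0)) :
    Tendsto G l (𝓝 0) ↔ Tendsto H l (𝓝 0) := by
  constructor
  · intro hG
    simpa [hc] using (hG.sub h).const_mul c⁻¹
  · intro hH
    simpa using (hH.const_mul c).add h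

theorem tendsto_zero_iff_of_mul_le_of_le_mul {c₁ c₂ : ℝ} (hc₁ : 0 < c₁) (hc₂ : 0 < c₂)
    (h₁ : ∀ᶠ x in l, c₁ * F x ≤ H x) (h₂ : ∀ᶠ x in l, H x ≤ c₂ * F x) :
    Tendsto H l (𝓝 0) ↔ Tendsto F l (𝓝 0) := by
  constructor
  · intro hH
    refine tendsto_of_tendsto_of_tendsto_of_le_of_le' (by simpa using hH.const_mul c₂⁻¹)
      (by simpa using hH.const_mul c₁⁻¹) ?_ ?_
    · filter_upwards [h₂] with x hx
      rwa [inv_mul_le_iff₀ hc₂]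
    · filter_upwards [h₁] with x hx
      rwa [le_inv_mul_iff₀ hc₁]
  · intro hF
    exact tendsto_of_tendsto_of_tendsto_of_le_of_le' (by simpa using hF.const_mul c₁)
      (by simpa using hF.const_mul c₂) h₁ h₂

end Limits

theorem abs_im_integral_sub_integral_le {X : Type*} [MeasurableSpace X] {μ : Measure X}
    [IsFiniteMeasure μ] {f : X → ℂ} {g : X → ℝ} {C : ℝ}
    (hf : AEStronglyMeasurable f μ) (hg : Integrable g μ)
    (hfg : ∀ x, ‖f x - I * g x‖ ≤ C) :
    |(∫ x, f x ∂μ).im - ∫ x, g x ∂μ| ≤ C * μ.real Set.univ := by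
  have hIg : Integrable (fun x => I * g x) μ := hg.ofReal.const_mul I
  have hsub : Integrable (fun x => f x - I * g x) μ :=
    .of_bound (hf.sub hIg.aestronglyMeasurable) C (ae_of_all _ hfg)
  have hf' : Integrable f μ := (hsub.add hIg).congr (ae_of_all _ fun x => by simp)
  have him : (∫ x, f x ∂μ).im - ∫ x, g x ∂μ = (∫ x, f x - I * g x ∂μ).im := by
    rw [integral_sub hf' hIg, integral_const_mul, integral_complex_ofReal]
    simp
  rw [him]
  exact (abs_im_le_norm _).trans (norm_integral_le_of_norm_le_const (ae_of_all _ hfg))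

section UnitVector

variable {ι : Type*} [Fintype ι]

theorem abs_inv_norm_mul_apply_le_one (x : EuclideanSpace ℝ ι) (i : ι) : |‖x‖⁻¹ * x i| ≤ 1 := by
  rw [abs_mul, abs_inv, abs_norm]
  exact inv_mul_le_one_of_le₀ ((Real.norm_eq_abs _).symm.trans_le (PiLp.norm_apply_le x i))
    (norm_nonneg x)

theorem inv_norm_mul_dotProduct_self {x : EuclideanSpace ℝ ι} (hx : x ≠ 0) :
    (fun i => ‖x‖⁻¹ * x i) ⬝ᵥ (fun i => ‖x‖⁻¹ * x i) = 1 := by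
  have hsq : ∑ i, x i * x i = ‖x‖ ^ 2 := by
    rw [EuclideanSpace.norm_sq_eq]
    exact Finset.sum_congr rfl fun i _ => by rw [Real.norm_eq_abs, sq_abs, sq]
  have hx' : ‖x‖ ≠ 0 := norm_ne_zero_iff.mpr hx
  simp only [dotProduct]
  calc ∑ i, ‖x‖⁻¹ * x i * (‖x‖⁻¹ * x i) = (‖x‖ ^ 2)⁻¹ * ∑ i, x i * x i := by
        rw [Finset.mul_sum]
        exact Finset.sum_congr rfl fun i _ => by ring
    _ = 1 := by rw [hsq, inv_mul_cancel₀ (pow_ne_zero 2 hx')]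

theorem inv_norm_mul_smul_apply {R : ℝ} (hR : 0 < R) {η : EuclideanSpace ℝ ι} (hη : ‖η‖ = 1) :
    (fun i => ‖R • η‖⁻¹ * (R • η) i) = fun i => η i := by
  funext i
  rw [norm_smul, hη, Real.norm_of_nonneg hR.le, mul_one, PiLp.smul_apply, smul_eq_mul,
    inv_mul_cancel_left₀ hR.ne']

theorem ofLp_ne_zero_of_mem_sphere (η : Metric.sphere (0 : EuclideanSpace ℝ ι) 1) :
    (fun i => η.1 i) ≠ 0 := by
  intro h
  apply ne_zero_of_norm_ne_zero ((mem_sphere_zero_iff_norm.mp η.2).trans_ne one_ne_zero)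
  ext i
  exact congrFun h i

end UnitVector

section Weight

variable {n : Type*} [Fintype n] [DecidableEq n]

def formWeight (a : Matrix n n ℝ) (η : n → ℝ) : ℝ := (√((a⁻¹ *ᵥ η) ⬝ᵥ η))⁻¹

theorem xiVec_eq (a : Matrix (Fin 3) (Fin 3) ℝ) (κ₁ ω : ℝ) (η : Fin 3 → ℝ) :
    xiVec a κ₁ ω η = (ω * √κ₁ * formWeight a η) • (a⁻¹ *ᵥ η) := rfl

theorem dotProduct_mulVec_xiVec {a : Matrix (Fin 3) (Fin 3) ℝ} (ha : IsUnit a) (κ₁ ω : ℝ)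
    (η : Fin 3 → ℝ) :
    η ⬝ᵥ (a *ᵥ xiVec a κ₁ ω η) = ω * √κ₁ * formWeight a η * (η ⬝ᵥ η) := by
  rw [xiVec_eq, mulVec_smul, mulVec_mulVec, mul_nonsing_inv _ ((isUnit_iff_isUnit_det a).mp ha),
    one_mulVec, dotProduct_smul, smul_eq_mul]

theorem dotProduct_inv_mulVec_pos {a : Matrix n n ℝ} (ha : a.PosDef) {η : n → ℝ} (hη : η ≠ 0) :
    0 < (a⁻¹ *ᵥ η) ⬝ᵥ η := by
  simpa [dotProduct_comm] using ha.inv.dotProduct_mulVec_pos hη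

theorem formWeight_pos {a : Matrix n n ℝ} (ha : a.PosDef) {η : n → ℝ} (hη : η ≠ 0) :
    0 < formWeight a η :=
  inv_pos.mpr (Real.sqrt_pos.mpr (dotProduct_inv_mulVec_pos ha hη))

theorem continuous_formWeight_sphere {a : Matrix n n ℝ} (ha : a.PosDef) :
    Continuous fun η : Metric.sphere (0 : EuclideanSpace ℝ n) 1 =>
      formWeight a (fun i => η.1 i) := by
  have hform : Continuous fun η : Metric.sphere (0 : EuclideanSpace ℝ n) 1 =>
      (a⁻¹ *ᵥ fun i => η.1 i) ⬝ᵥ fun i => η.1 i := by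
    fun_prop
  exact (Real.continuous_sqrt.comp hform).inv₀
    fun η => (Real.sqrt_pos.mpr (dotProduct_inv_mulVec_pos ha (ofLp_ne_zero_of_mem_sphere η))).ne'

theorem exists_formWeight_bounds [Nonempty n] {a : Matrix n n ℝ} (ha : a.PosDef) :
    ∃ c₁ c₂ : ℝ, 0 < c₁ ∧ 0 < c₂ ∧ ∀ η : Metric.sphere (0 : EuclideanSpace ℝ n) 1,
      c₁ ≤ formWeight a (fun i => η.1 i) ∧ formWeight a (fun i => η.1 i) ≤ c₂ := by
  have : Nonempty (Metric.sphere (0 : EuclideanSpace ℝ n) 1) :=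
    (NormedSpace.sphere_nonempty.mpr zero_le_one).to_subtype
  have hw := (continuous_formWeight_sphere ha).continuousOn (s := Set.univ)
  obtain ⟨η₁, -, h₁⟩ := isCompact_univ.exists_isMinOn Set.univ_nonempty hw
  obtain ⟨η₂, -, h₂⟩ := isCompact_univ.exists_isMaxOn Set.univ_nonempty hw
  exact ⟨_, _, formWeight_pos ha (ofLp_ne_zero_of_mem_sphere η₁),
    formWeight_pos ha (ofLp_ne_zero_of_mem_sphere η₂),
    fun η => ⟨h₁ (Set.mem_univ η), h₂ (Set.mem_univ η)⟩⟩

end Weight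

theorem norm_conj_mul_sum_sub_le {ι : Type*} [Fintype ι] (a : Matrix ι ι ℝ) {η ξ : ι → ℝ}
    {D : ι → ℂ} {u : ℂ} {ε : ℝ} (hη : ∀ k, |η k| ≤ 1) (hD : ∀ j, ‖D j - I * ξ j * u‖ ≤ ε) :
    ‖conj u * ∑ k, ∑ j, (a k j : ℂ) * η k * D j - I * ↑((η ⬝ᵥ (a *ᵥ ξ)) * ‖u‖ ^ 2)‖
      ≤ (∑ k, ∑ j, |a k j|) * ‖u‖ * ε := by
  have hleading : ∑ k, ∑ j, (a k j : ℂ) * η k * (I * ξ j * u) = I * u * ↑(η ⬝ᵥ (a *ᵥ ξ)) := by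
    simp only [dotProduct, mulVec, ofReal_sum, ofReal_mul, Finset.mul_sum]
    refine Finset.sum_congr rfl fun k _ => Finset.sum_congr rfl fun j _ => ?_
    ring
  have hsplit : conj u * ∑ k, ∑ j, (a k j : ℂ) * η k * D j - I * ↑((η ⬝ᵥ (a *ᵥ ξ)) * ‖u‖ ^ 2)
      = conj u * ∑ k, ∑ j, (a k j : ℂ) * η k * (D j - I * ξ j * u) := by
    simp only [mul_sub, Finset.sum_sub_distrib, hleading, ofReal_mul, ofReal_pow, ← conj_mul' u]
    ring
  have hterm : ∀ k j, ‖(a k j : ℂ) * η k * (D j - I * ξ j * u)‖ ≤ |a k j| * ε := fun k j => by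
    rw [norm_mul, norm_mul, norm_real, norm_real, Real.norm_eq_abs, Real.norm_eq_abs]
    have hε : 0 ≤ ε := (norm_nonneg _).trans (hD j)
    calc |a k j| * |η k| * ‖D j - I * ξ j * u‖ ≤ |a k j| * 1 * ε := by gcongr; exacts [hη k, hD j]
      _ = |a k j| * ε := by ring
  rw [hsplit, norm_mul, RCLike.norm_conj, mul_comm _ ‖u‖, mul_assoc, Finset.sum_mul]
  gcongr
  refine (norm_sum_le _ _).trans (Finset.sum_le_sum fun k _ => ?_)
  rw [Finset.sum_mul]
  exact (norm_sum_le _ _).trans (Finset.sum_le_sum fun j _ => hterm k j)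

theorem norm_conj_mul_T1_sub_le {a : Matrix (Fin 3) (Fin 3) ℝ} (ha : IsUnit a) {κ₁ ω C₀ : ℝ}
    {v : E3 → ℂ} {x : E3} (hx : x ≠ 0) (hv1 : ‖v x‖ ≤ C₀ / ‖x‖)
    (hv2 : ∀ k : Fin 3, ‖fderiv ℝ v x (EuclideanSpace.single k 1)
      - I * ((xiVec a κ₁ ω (fun i => ‖x‖⁻¹ * x i) k : ℝ) : ℂ) * v x‖ ≤ C₀ / ‖x‖ ^ 2) :
    ‖conj (v x) * T1 a v x
        - I * ↑(ω * √κ₁ * (formWeight a (fun i => ‖x‖⁻¹ * x i) * ‖v x‖ ^ 2))‖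
      ≤ (∑ k, ∑ j, |a k j|) * (C₀ / ‖x‖) * (C₀ / ‖x‖ ^ 2) := by
  have hT1 : T1 a v x = ∑ k, ∑ j, (a k j : ℂ) * ((‖x‖⁻¹ * x k : ℝ) : ℂ)
      * fderiv ℝ v x (EuclideanSpace.single j 1) := by
    simp only [T1, div_eq_inv_mul]
  have h := norm_conj_mul_sum_sub_le a (abs_inv_norm_mul_apply_le_one x) hv2
  rw [dotProduct_mulVec_xiVec ha, inv_norm_mul_dotProduct_self hx, mul_one, mul_assoc] at h
  rw [hT1]
  refine h.trans (mul_le_mul_of_nonneg_right (mul_le_mul_of_nonneg_left hv1 ?_) ?_)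
  · positivity
  · exact (norm_nonneg _).trans (hv2 0)

-- `fderiv` of an arbitrary function is Borel measurable, so no continuity of `∇v` is needed.
theorem measurable_T1 (a : Matrix (Fin 3) (Fin 3) ℝ) (v : E3 → ℂ) : Measurable (T1 a v) := by
  unfold T1
  fun_prop

section Sphere

variable {R₀ R : ℝ} {v : E3 → ℂ}

theorem norm_smul_of_mem_sphere {E : Type*} [NormedAddCommGroup E] [NormedSpace ℝ E]
    (hR : 0 ≤ R) (η : Metric.sphere (0 : E) 1) : ‖R • (η : E)‖ = R := by
  rw [norm_smul, mem_sphere_zero_iff_norm.mp η.2, mul_one, Real.norm_of_nonneg hR]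

theorem Continuous.integrable_sphMeasure {F : Type*} [NormedAddCommGroup F]
    {f : Metric.sphere (0 : E3) 1 → F} (hf : Continuous f) : Integrable f sphMeasure :=
  hf.integrable_of_hasCompactSupport (.of_compactSpace f)

theorem continuous_comp_smul_sphere (hdiff : ∀ x : E3, R₀ ≤ ‖x‖ → DifferentiableAt ℝ v x)
    (hR : R₀ ≤ R) (hRpos : 0 < R) :
    Continuous fun η : Metric.sphere (0 : E3) 1 => v (R • (η : E3)) :=
  continuous_iff_continuousAt.mpr fun η =>
    (hdiff _ ((norm_smul_of_mem_sphere hRpos.le η).symm ▸ hR)).continuousAt.comp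
      (continuous_subtype_val.const_smul R).continuousAt

theorem abs_im_integral_conj_mul_T1_sub_le {a : Matrix (Fin 3) (Fin 3) ℝ} (ha : a.PosDef)
    {κ₁ ω C₀ : ℝ} (hdiff : ∀ x : E3, R₀ ≤ ‖x‖ → DifferentiableAt ℝ v x)
    (hv1 : ∀ x : E3, R₀ ≤ ‖x‖ → ‖v x‖ ≤ C₀ / ‖x‖)
    (hv2 : ∀ x : E3, R₀ ≤ ‖x‖ → ∀ k : Fin 3,
      ‖fderiv ℝ v x (EuclideanSpace.single k 1)
          - I * ((xiVec a κ₁ ω (fun i => ‖x‖⁻¹ * x i) k : ℝ) : ℂ) * v x‖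
        ≤ C₀ / ‖x‖ ^ 2)
    (hR : R₀ ≤ R) (hRpos : 0 < R) :
    |(∫ η : Metric.sphere (0 : E3) 1,
          conj (v (R • (η : E3))) * T1 a v (R • (η : E3)) ∂sphMeasure).im
        - ∫ η : Metric.sphere (0 : E3) 1,
          ω * √κ₁ * (formWeight a (fun i => η.1 i) * ‖v (R • (η : E3))‖ ^ 2) ∂sphMeasure|
      ≤ (∑ k, ∑ j, |a k j|) * (C₀ / R) * (C₀ / R ^ 2) * sphMeasure.real Set.univ := by
  have hvc := continuous_comp_smul_sphere hdiff hR hRpos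
  have hsmul : Measurable fun η : Metric.sphere (0 : E3) 1 => R • (η : E3) :=
    (continuous_subtype_val.const_smul R).measurable
  refine abs_im_integral_sub_integral_le ?_ ?_ fun η => ?_
  · exact ((continuous_conj.comp hvc).measurable.mul
      ((measurable_T1 a v).comp hsmul)).aestronglyMeasurable
  · exact (continuous_const.mul
      ((continuous_formWeight_sphere ha).mul (hvc.norm.pow 2))).integrable_sphMeasure
  · have hnorm := norm_smul_of_mem_sphere hRpos.le η
    have hx : R₀ ≤ ‖R • (η : E3)‖ := hnorm.symm ▸ hR
    have h := norm_conj_mul_T1_sub_le ha.isUnit (ne_zero_of_norm_ne_zero (hnorm.symm ▸ hRpos.ne'))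
      (hv1 _ hx) (hv2 _ hx)
    rwa [inv_norm_mul_smul_apply hRpos (mem_sphere_zero_iff_norm.mp η.2), hnorm] at h

theorem tendsto_sphere_integral_im_sub_weighted {a : Matrix (Fin 3) (Fin 3) ℝ} (ha : a.PosDef)
    {κ₁ ω C₀ : ℝ} (hdiff : ∀ x : E3, R₀ ≤ ‖x‖ → DifferentiableAt ℝ v x)
    (hv1 : ∀ x : E3, R₀ ≤ ‖x‖ → ‖v x‖ ≤ C₀ / ‖x‖)
    (hv2 : ∀ x : E3, R₀ ≤ ‖x‖ → ∀ k : Fin 3,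
      ‖fderiv ℝ v x (EuclideanSpace.single k 1)
          - I * ((xiVec a κ₁ ω (fun i => ‖x‖⁻¹ * x i) k : ℝ) : ℂ) * v x‖
        ≤ C₀ / ‖x‖ ^ 2) :
    Tendsto (fun R : ℝ =>
        R ^ 2 * (∫ η : Metric.sphere (0 : E3) 1,
          conj (v (R • (η : E3))) * T1 a v (R • (η : E3)) ∂sphMeasure).im
        - ω * √κ₁ * (R ^ 2 * ∫ η : Metric.sphere (0 : E3) 1,
          formWeight a (fun i => η.1 i) * ‖v (R • (η : E3))‖ ^ 2 ∂sphMeasure))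
      atTop (𝓝 0) := by
  set K := (∑ k, ∑ j, |a k j|) * C₀ ^ 2 * sphMeasure.real Set.univ
  refine squeeze_zero_norm' ?_ (by simpa using (tendsto_inv_atTop_zero (𝕜 := ℝ)).const_mul K)
  filter_upwards [eventually_ge_atTop R₀, eventually_gt_atTop 0] with R hR hRpos
  have h := abs_im_integral_conj_mul_T1_sub_le ha hdiff hv1 hv2 hR hRpos
  rw [integral_const_mul] at h
  have hfactor : ∀ X Y : ℝ, ‖R ^ 2 * X - ω * √κ₁ * (R ^ 2 * Y)‖ = R ^ 2 * |X - ω * √κ₁ * Y| := by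
    intro X Y
    rw [Real.norm_eq_abs,
      show R ^ 2 * X - ω * √κ₁ * (R ^ 2 * Y) = R ^ 2 * (X - ω * √κ₁ * Y) by ring,
      abs_mul, abs_of_nonneg (sq_nonneg R)]
  calc _ = _ := hfactor _ _
    _ ≤ R ^ 2 * ((∑ k, ∑ j, |a k j|) * (C₀ / R) * (C₀ / R ^ 2) * sphMeasure.real Set.univ) := by
      gcongr
    _ = K * R⁻¹ := by
      simp only [K]
      field_simp

theorem eventually_sphere_integral_weighted_bounds {w : Metric.sphere (0 : E3) 1 → ℝ}
    (hw : Continuous w) {c₁ c₂ : ℝ} (hwb : ∀ η, c₁ ≤ w η ∧ w η ≤ c₂)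
    (hdiff : ∀ x : E3, R₀ ≤ ‖x‖ → DifferentiableAt ℝ v x) :
    (∀ᶠ R in atTop, c₁ * (R ^ 2 * ∫ η, ‖v (R • (η : E3))‖ ^ 2 ∂sphMeasure)
        ≤ R ^ 2 * ∫ η, w η * ‖v (R • (η : E3))‖ ^ 2 ∂sphMeasure) ∧
    (∀ᶠ R in atTop, R ^ 2 * ∫ η, w η * ‖v (R • (η : E3))‖ ^ 2 ∂sphMeasure
        ≤ c₂ * (R ^ 2 * ∫ η, ‖v (R • (η : E3))‖ ^ 2 ∂sphMeasure)) := by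
  have hbounds : ∀ R, R₀ ≤ R → 0 < R →
      c₁ * ∫ η, ‖v (R • (η : E3))‖ ^ 2 ∂sphMeasure
          ≤ ∫ η, w η * ‖v (R • (η : E3))‖ ^ 2 ∂sphMeasure ∧
        ∫ η, w η * ‖v (R • (η : E3))‖ ^ 2 ∂sphMeasure
          ≤ c₂ * ∫ η, ‖v (R • (η : E3))‖ ^ 2 ∂sphMeasure := by
    intro R hR hRpos
    have hsq := (continuous_comp_smul_sphere hdiff hR hRpos).norm.pow 2
    rw [← integral_const_mul, ← integral_const_mul]
    exact ⟨integral_mono (hsq.integrable_sphMeasure.const_mul _) (hw.mul hsq).integrable_sphMeasure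
        fun η => mul_le_mul_of_nonneg_right (hwb η).1 (sq_nonneg _),
      integral_mono (hw.mul hsq).integrable_sphMeasure (hsq.integrable_sphMeasure.const_mul _)
        fun η => mul_le_mul_of_nonneg_right (hwb η).2 (sq_nonneg _)⟩
  constructor <;> filter_upwards [eventually_ge_atTop R₀, eventually_gt_atTop 0] with R hR hRpos
  · rw [mul_left_comm]
    exact mul_le_mul_of_nonneg_left (hbounds R hR hRpos).1 (sq_nonneg R)
  · rw [mul_left_comm c₂]
    exact mul_le_mul_of_nonneg_left (hbounds R hR hRpos).2 (sq_nonneg R)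

end Sphere

theorem stmt8_general (a : Matrix (Fin 3) (Fin 3) ℝ) (ha : a.PosDef)
    (κ₁ ω : ℝ) (hκ : 0 < κ₁) (hω : ω ≠ 0)
    (R₀ C₀ : ℝ) (v : E3 → ℂ)
    (hdiff : ∀ x : E3, R₀ ≤ ‖x‖ → DifferentiableAt ℝ v x)
    (hv1 : ∀ x : E3, R₀ ≤ ‖x‖ → ‖v x‖ ≤ C₀ / ‖x‖)
    (hv2 : ∀ x : E3, R₀ ≤ ‖x‖ → ∀ k : Fin 3,
      ‖fderiv ℝ v x (EuclideanSpace.single k 1)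
          - Complex.I * ((xiVec a κ₁ ω (fun i => ‖x‖⁻¹ * x i) k : ℝ) : ℂ) * v x‖
        ≤ C₀ / ‖x‖ ^ 2) :
    Tendsto (fun R : ℝ =>
        R ^ 2 * (∫ η : Metric.sphere (0 : E3) 1,
          (starRingEnd ℂ) (v (R • (η : E3))) * T1 a v (R • (η : E3)) ∂sphMeasure).im)
      atTop (𝓝 0)
    ↔
    Tendsto (fun R : ℝ =>
        R ^ 2 * ∫ η : Metric.sphere (0 : E3) 1, ‖v (R • (η : E3))‖ ^ 2 ∂sphMeasure)
      atTop (𝓝 0) := by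
  obtain ⟨c₁, c₂, hc₁, hc₂, hw⟩ := exists_formWeight_bounds ha
  obtain ⟨hlower, hupper⟩ :=
    eventually_sphere_integral_weighted_bounds (continuous_formWeight_sphere ha) hw hdiff
  have hc : ω * √κ₁ ≠ 0 := mul_ne_zero hω (Real.sqrt_pos.mpr hκ).ne'
  exact (tendsto_zero_iff_of_tendsto_sub_const_mul hc
    (tendsto_sphere_integral_im_sub_weighted ha hdiff hv1 hv2)).trans
    (tendsto_zero_iff_of_mul_le_of_le_mul hc₁ hc₂ hlower hupper)

/-- Rellich–Vekua type equivalence: for a `C¹` function `v` on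
`{|x| ≥ R₀}` satisfying the radiation estimates associated with `A₁`,
`lim_{R→∞} Im ∫_{Σ_R} conj(v) T₁v dσ = 0 ↔ lim_{R→∞} ∫_{Σ_R} |v|² dσ = 0`,
where the integral over `Σ_R` is expressed through the unit-sphere surface
measure as `R² ∫_{Σ_1} f(Rη) dσ(η)`. -/
theorem stmt8 (a : Matrix (Fin 3) (Fin 3) ℝ) (ha : a.PosDef) (hsym : a.IsSymm)
    (κ₁ ω : ℝ) (hκ : 0 < κ₁) (hω : ω ≠ 0)
    (R₀ C₀ : ℝ) (hR₀ : 0 < R₀) (hC₀ : 0 < C₀) (v : E3 → ℂ)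
    (hdiff : ∀ x : E3, R₀ ≤ ‖x‖ → DifferentiableAt ℝ v x)
    (hC1 : ContinuousOn (fun x => fderiv ℝ v x) {x : E3 | R₀ ≤ ‖x‖})
    (hv1 : ∀ x : E3, R₀ ≤ ‖x‖ → ‖v x‖ ≤ C₀ / ‖x‖)
    (hv2 : ∀ x : E3, R₀ ≤ ‖x‖ → ∀ k : Fin 3,
      ‖fderiv ℝ v x (EuclideanSpace.single k 1)
          - Complex.I * ((xiVec a κ₁ ω (fun i => ‖x‖⁻¹ * x i) k : ℝ) : ℂ) * v x‖
        ≤ C₀ / ‖x‖ ^ 2) :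
    Tendsto (fun R : ℝ =>
        R ^ 2 * (∫ η : Metric.sphere (0 : E3) 1,
          (starRingEnd ℂ) (v (R • (η : E3))) * T1 a v (R • (η : E3)) ∂sphMeasure).im)
      atTop (𝓝 0)
    ↔
    Tendsto (fun R : ℝ =>
        R ^ 2 * ∫ η : Metric.sphere (0 : E3) 1, ‖v (R • (η : E3))‖ ^ 2 ∂sphMeasure)
      atTop (𝓝 0) :=
  stmt8_general a ha κ₁ ω hκ hω R₀ C₀ v hdiff hv1 hv2
end
end
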